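/- Let P and Q be p×p real symmetric positive definite matrices and let ε ∈ [0, 1) be such that (1 − ε)·Q ⪯ P ⪯ (1 + ε)·Q in the Loewner order. Then ‖P^{−1/2} − (1 + ε)^{−1/2}·Q^{−1/2}‖ ≤ ((1 − ε)^{−1/2} − (1 + ε)^{−1/2})·‖Q^{−1/2}‖, and consequently ‖P^{−1/2} − Q^{−1/2}‖ ≤ ((1 − ε)^{−1/2} − 2(1 + ε)^{−1/2} + 1)·‖Q^{−1/2}‖. -/

import Mathlib

/-!
Inversion is operator antitone (compare the two Schur complements of `[[B, 1], [1, A⁻¹]]`) and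
the square root is operator monotone, so `(1 - ε) Q ⪯ P ⪯ (1 + ε) Q` gives
`(1 + ε)^{-1/2} Q^{-1/2} ⪯ P^{-1/2} ⪯ (1 - ε)^{-1/2} Q^{-1/2}`. The operator norm is monotone on
positive semidefinite matrices, which bounds `P^{-1/2} - (1 + ε)^{-1/2} Q^{-1/2}`; the triangle
inequality then gives the second estimate.
-/

open Matrix
open scoped Matrix.Norms.L2Operator

/-- The positive semidefinite square root of a real matrix (zero junk value when the matrix
is not positive semidefinite). -/
noncomputable def matSqrt {n : Type*} [Fintype n] [DecidableEq n]
    (A : Matrix n n ℝ) : Matrix n n ℝ :=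
  letI := Classical.propDecidable
  if h : A.PosSemidef then
    h.1.eigenvectorUnitary * diagonal ((RCLike.ofReal : ℝ → ℝ) ∘ Real.sqrt ∘ h.1.eigenvalues) *
      (star h.1.eigenvectorUnitary : Matrix n n ℝ)
  else 0

/-- `A^{−1/2}`: the inverse of the positive semidefinite square root. -/
noncomputable def matInvSqrt {n : Type*} [Fintype n] [DecidableEq n]
    (A : Matrix n n ℝ) : Matrix n n ℝ :=
  (matSqrt A)⁻¹

open scoped MatrixOrder

namespace IsometricContinuousFunctionalCalculus

variable {A : Type*} [NormedRing A] [StarRing A] [NormedAlgebra ℝ A] [PartialOrder A]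
  [StarOrderedRing A] [IsometricContinuousFunctionalCalculus ℝ A IsSelfAdjoint]
  [NonnegSpectrumClass ℝ A]

lemma norm_le_norm_of_nonneg_of_le {a b : A} (ha : 0 ≤ a) (hab : a ≤ b) : ‖a‖ ≤ ‖b‖ := by
  have hb_sa : IsSelfAdjoint b := .of_nonneg (ha.trans hab)
  have hb : b ≤ algebraMap ℝ A ‖b‖ := (le_algebraMap_iff_spectrum_le hb_sa).mpr fun x hx =>
    (le_abs_self x).trans (norm_spectrum_le b hx hb_sa)
  rw [← cfc_id' ℝ a]
  refine norm_cfc_le (norm_nonneg b) fun x hx => ?_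
  rw [Real.norm_of_nonneg (spectrum_nonneg_of_nonneg ha hx)]
  exact (le_algebraMap_iff_spectrum_le (.of_nonneg ha)).mp (hab.trans hb) x hx

lemma norm_sub_smul_le_of_smul_le_of_le_smul {x r : A} {a b : ℝ} (hab : a ≤ b)
    (hlo : a • r ≤ x) (hhi : x ≤ b • r) : ‖x - a • r‖ ≤ (b - a) * ‖r‖ := by
  have hgap : x - a • r ≤ (b - a) • r := by
    rw [sub_smul]
    exact sub_le_sub_right hhi _
  rw [← Real.norm_of_nonneg (sub_nonneg.mpr hab), ← norm_smul]
  exact norm_le_norm_of_nonneg_of_le (sub_nonneg.mpr hlo) hgap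

end IsometricContinuousFunctionalCalculus

lemma CFC.sqrt_smul {A : Type*} [PartialOrder A] [Ring A] [TopologicalSpace A] [StarRing A]
    [Algebra ℝ A] [StarOrderedRing A] [ContinuousFunctionalCalculus ℝ A IsSelfAdjoint]
    [NonnegSpectrumClass ℝ A] [IsTopologicalRing A] [T2Space A] [PosSMulMono ℝ A]
    {a : A} {c : ℝ} (hc : 0 ≤ c) (ha : 0 ≤ a) :
    CFC.sqrt (c • a) = Real.sqrt c • CFC.sqrt a := by
  refine CFC.sqrt_unique ?_ (smul_nonneg (Real.sqrt_nonneg c) (CFC.sqrt_nonneg a))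
  rw [smul_mul_smul_comm, Real.mul_self_sqrt hc, CFC.sqrt_mul_sqrt_self a ha]

namespace Matrix

variable {n : Type*} [Fintype n]

lemma IsHermitian.dotProduct_mulVec_comm {S : Matrix n n ℝ} (hS : S.IsHermitian)
    (v w : n → ℝ) : v ⬝ᵥ S *ᵥ w = (S *ᵥ v) ⬝ᵥ w := by
  rw [dotProduct_mulVec, ← mulVec_transpose, ← conjTranspose_eq_transpose_of_trivial, hS.eq,
    dotProduct_comm]

variable [DecidableEq n]

lemma PosDef.posSemidef_inv_sub_inv {R : Type*} [Field R] [PartialOrder R] [StarRing R]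
    [StarOrderedRing R] {A B : Matrix n n R} (hA : A.PosDef) (hB : B.PosDef)
    (hAB : (B - A).PosSemidef) : (A⁻¹ - B⁻¹).PosSemidef := by
  have := hB.isUnit.invertible
  have := hA.isUnit.invertible
  have hblock : (fromBlocks B 1 1ᴴ A⁻¹).PosSemidef := by
    rw [PosDef.fromBlocks₂₂ _ _ hA.inv]
    simpa using hAB
  rw [PosDef.fromBlocks₁₁ _ _ hB] at hblock
  simpa using hblock

/-- If `√B - √A` had an eigenvalue `t < 0` with eigenvector `v`, then
`vᵀ (B - A) v = t · vᵀ (√B + √A) v` would be negative. -/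
lemma sqrt_le_sqrt {A B : Matrix n n ℝ} (hA : 0 ≤ A) (hAB : A ≤ B) :
    CFC.sqrt A ≤ CFC.sqrt B := by
  set a := CFC.sqrt A
  set b := CFC.sqrt B
  have ha : a.PosSemidef := nonneg_iff_posSemidef.mp (CFC.sqrt_nonneg A)
  have hb : b.PosSemidef := nonneg_iff_posSemidef.mp (CFC.sqrt_nonneg B)
  have hS : (b - a).IsHermitian := hb.isHermitian.sub ha.isHermitian
  have hdecomp : B - A = b * (b - a) + (b - a) * a := by
    rw [mul_sub, sub_mul, CFC.sqrt_mul_sqrt_self B (hA.trans hAB), CFC.sqrt_mul_sqrt_self A hA]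
    abel
  rw [le_iff, hS.posSemidef_iff_eigenvalues_nonneg]
  intro i
  by_contra! ht
  set t := hS.eigenvalues i
  set v : n → ℝ := (hS.eigenvectorBasis i).ofLp
  have hv : v ≠ 0 := fun h0 =>
    hS.eigenvectorBasis.orthonormal.ne_zero i (by ext j; exact congrFun h0 j)
  have heig : (b - a) *ᵥ v = t • v := hS.mulVec_eigenvectorBasis i
  have hgap : v ⬝ᵥ b *ᵥ v - v ⬝ᵥ a *ᵥ v = t * (v ⬝ᵥ v) := by
    rw [← dotProduct_sub, ← sub_mulVec, heig, dotProduct_smul, smul_eq_mul]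
  have hquad : v ⬝ᵥ (B - A) *ᵥ v = t * (v ⬝ᵥ b *ᵥ v + v ⬝ᵥ a *ᵥ v) := by
    rw [hdecomp, add_mulVec, dotProduct_add, ← mulVec_mulVec, ← mulVec_mulVec,
      hS.dotProduct_mulVec_comm v (a *ᵥ v), heig, mulVec_smul, dotProduct_smul, smul_dotProduct,
      smul_eq_mul, smul_eq_mul]
    ring
  have hBA : 0 ≤ v ⬝ᵥ (B - A) *ᵥ v := by simpa using hAB.dotProduct_mulVec_nonneg v
  have ha' : 0 ≤ v ⬝ᵥ a *ᵥ v := by simpa using ha.dotProduct_mulVec_nonneg v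
  have hb' : 0 ≤ v ⬝ᵥ b *ᵥ v := by simpa using hb.dotProduct_mulVec_nonneg v
  have hvv : 0 < v ⬝ᵥ v := by simpa using dotProduct_star_self_pos_iff.mpr hv
  nlinarith [mul_pos (neg_pos.mpr ht) hvv]

end Matrix

section InvSqrt

variable {n : Type*} [Fintype n] [DecidableEq n]

lemma matSqrt_eq_cfcSqrt (A : Matrix n n ℝ) : matSqrt A = CFC.sqrt A := by
  by_cases hA : A.PosSemidef
  · -- `matSqrt` diagonalises with the classical `DecidableEq n` instance
    obtain rfl : ‹DecidableEq n› = fun a b => Classical.propDecidable (a = b) :=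
      Subsingleton.elim _ _
    classical
    rw [matSqrt, dif_pos hA, CFC.sqrt_eq_cfc, cfc_nnreal_eq_real _ A, hA.1.cfc_eq]
    simp only [IsHermitian.cfc, Unitary.conjStarAlgAut_apply]
    rw [show Real.sqrt = fun x => (NNReal.sqrt x.toNNReal : ℝ) from funext Real.sqrt.eq_def]
  · rw [matSqrt, dif_neg hA, CFC.sqrt,
      cfcₙ_apply_of_not_predicate A (nonneg_iff_posSemidef.not.mpr hA)]

lemma matInvSqrt_eq_cfcSqrt_inv {A : Matrix n n ℝ} (hA : A.PosSemidef) :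
    matInvSqrt A = CFC.sqrt A⁻¹ := by
  rw [matInvSqrt, matSqrt_eq_cfcSqrt, hA.inv_sqrt]

lemma matInvSqrt_smul {A : Matrix n n ℝ} (hA : A.PosDef) {c : ℝ} (hc : 0 < c) :
    matInvSqrt (c • A) = (Real.sqrt c)⁻¹ • matInvSqrt A := by
  have := invertibleOfNonzero hc.ne'
  rw [matInvSqrt_eq_cfcSqrt_inv (hA.smul hc).posSemidef, matInvSqrt_eq_cfcSqrt_inv hA.posSemidef,
    Matrix.inv_smul A c hA.det_pos.ne'.isUnit, invOf_eq_inv,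
    CFC.sqrt_smul (inv_nonneg.mpr hc.le) (nonneg_iff_posSemidef.mpr hA.inv.posSemidef),
    Real.sqrt_inv]

lemma matInvSqrt_le_matInvSqrt {A B : Matrix n n ℝ} (hA : A.PosDef) (hB : B.PosDef)
    (hAB : A ≤ B) : matInvSqrt B ≤ matInvSqrt A := by
  rw [matInvSqrt_eq_cfcSqrt_inv hA.posSemidef, matInvSqrt_eq_cfcSqrt_inv hB.posSemidef]
  exact sqrt_le_sqrt (nonneg_iff_posSemidef.mpr hB.inv.posSemidef)
    (hA.posSemidef_inv_sub_inv hB hAB)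

end InvSqrt

/-- If `(1 − ε)·Q ⪯ P ⪯ (1 + ε)·Q` for symmetric positive definite `P, Q`
and `ε ∈ [0,1)`, then
`‖P^{−1/2} − (1+ε)^{−1/2}·Q^{−1/2}‖ ≤ ((1−ε)^{−1/2} − (1+ε)^{−1/2})·‖Q^{−1/2}‖`, and
consequently `‖P^{−1/2} − Q^{−1/2}‖ ≤ ((1−ε)^{−1/2} − 2(1+ε)^{−1/2} + 1)·‖Q^{−1/2}‖`. -/
theorem invsqrt_perturbation_bound
    (p : ℕ) (P Q : Matrix (Fin p) (Fin p) ℝ)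
    (hP : P.PosDef) (hQ : Q.PosDef) (ε : ℝ) (hε0 : 0 ≤ ε) (hε1 : ε < 1)
    (hlow : (P - (1 - ε) • Q).PosSemidef) (hup : ((1 + ε) • Q - P).PosSemidef) :
    ‖matInvSqrt P - (Real.sqrt (1 + ε))⁻¹ • matInvSqrt Q‖ ≤
        ((Real.sqrt (1 - ε))⁻¹ - (Real.sqrt (1 + ε))⁻¹) * ‖matInvSqrt Q‖ ∧
      ‖matInvSqrt P - matInvSqrt Q‖ ≤
        ((Real.sqrt (1 - ε))⁻¹ - 2 * (Real.sqrt (1 + ε))⁻¹ + 1) * ‖matInvSqrt Q‖ := by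
  set X := matInvSqrt P
  set R := matInvSqrt Q
  set d₁ := (Real.sqrt (1 - ε))⁻¹
  set d₂ := (Real.sqrt (1 + ε))⁻¹
  have h₁ : 0 < 1 - ε := by linarith
  have h₂ : 0 < 1 + ε := by linarith
  have hd : d₂ ≤ d₁ := inv_anti₀ (Real.sqrt_pos.mpr h₁) (Real.sqrt_le_sqrt (by linarith))
  have hd₂ : d₂ ≤ 1 := inv_le_one_of_one_le₀ (Real.one_le_sqrt.mpr (by linarith))
  have hlo : d₂ • R ≤ X := by
    rw [← matInvSqrt_smul hQ h₂]
    exact matInvSqrt_le_matInvSqrt hP (hQ.smul h₂) hup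
  have hhi : X ≤ d₁ • R := by
    rw [← matInvSqrt_smul hQ h₁]
    exact matInvSqrt_le_matInvSqrt (hQ.smul h₁) hP hlow
  have hfirst := IsometricContinuousFunctionalCalculus.norm_sub_smul_le_of_smul_le_of_le_smul
    hd hlo hhi
  refine ⟨hfirst, ?_⟩
  calc ‖X - R‖ = ‖(X - d₂ • R) - (1 - d₂) • R‖ := by
        rw [sub_smul, one_smul, sub_sub_sub_cancel_right]
    _ ≤ ‖X - d₂ • R‖ + ‖(1 - d₂) • R‖ := norm_sub_le _ _
    _ ≤ (d₁ - d₂) * ‖R‖ + (1 - d₂) * ‖R‖ := by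
      rw [norm_smul, Real.norm_of_nonneg (by linarith)]
      gcongr
    _ = (d₁ - 2 * d₂ + 1) * ‖R‖ := by ring
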